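/- Let a, b, c, d be real numbers with 0 < a < b < c < d, c − b < b − a, and b − a < d − c. In ℝ^6 equipped with the supremum norm, let A = {p₁, p₂} and B = {q₁, q₂} where p₁ = (d, b, a, c, a, c), p₂ = (d, a, a, c, b, c), q₁ = (c, a, b, d, a, c), q₂ = (c, b, a, d, a, c). Then the Hausdorff distance between A and B equals d − c; in particular it is strictly positive. (This is the paper's computation d_H(𝒯(N₁), 𝒯(N₂)) = d − c > 0, showing that the two time consistent phylogenetic networks N₁ and N₂, though isomorphic as ordinary Reeb graphs, are distinguished by the Hausdorff distance between their tree decompositions.) -/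

import Mathlib

private lemma dist_eq_aux {c d : ℝ} (hcd : c < d) (p q : Fin 6 → ℝ)
    (h0 : p 0 = d ∧ q 0 = c)
    (hle : ∀ i : Fin 6, dist (p i) (q i) ≤ d - c) :
    dist p q = d - c := by
  have hr : (0:ℝ) ≤ d - c := by linarith
  apply le_antisymm
  · exact (dist_pi_le_iff hr).2 hle
  · have h := dist_le_pi_dist p q 0
    rw [h0.1, h0.2, Real.dist_eq, abs_of_nonneg hr] at h
    exact h

private lemma infDist_pair {α : Type*} [MetricSpace α] (x y z : α) :
    Metric.infDist x ({y, z} : Set α) = min (dist x y) (dist x z) := by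
  rw [show ({y, z} : Set α) = {y} ∪ {z} from rfl, Metric.infDist,
    EMetric.infEdist_union, EMetric.infEdist_singleton, EMetric.infEdist_singleton,
    ENNReal.toReal_min (edist_ne_top _ _) (edist_ne_top _ _),
    dist_edist, dist_edist]

/-- The Hausdorff distance between the tree decompositions (as sets of
cophenetic vectors in `ℝ^6` with the sup norm) of the two time consistent
phylogenetic networks of the paper's example equals `d − c`, and in particular
is strictly positive. -/
theorem hausdorffDist_tree_decompositions (a b c d : ℝ)
    (h0a : 0 < a) (hab : a < b) (hbc : b < c) (hcd : c < d)
    (h1 : c - b < b - a) (h2 : b - a < d - c) :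
    Metric.hausdorffDist
        ({![d, b, a, c, a, c], ![d, a, a, c, b, c]} : Set (Fin 6 → ℝ))
        ({![c, a, b, d, a, c], ![c, b, a, d, a, c]} : Set (Fin 6 → ℝ)) = d - c ∧
      0 < Metric.hausdorffDist
        ({![d, b, a, c, a, c], ![d, a, a, c, b, c]} : Set (Fin 6 → ℝ))
        ({![c, a, b, d, a, c], ![c, b, a, d, a, c]} : Set (Fin 6 → ℝ)) := by
  set p1 : Fin 6 → ℝ := ![d, b, a, c, a, c] with hp1
  set p2 : Fin 6 → ℝ := ![d, a, a, c, b, c] with hp2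
  set q1 : Fin 6 → ℝ := ![c, a, b, d, a, c] with hq1
  set q2 : Fin 6 → ℝ := ![c, b, a, d, a, c] with hq2
  have hr : (0:ℝ) ≤ d - c := by linarith
  have d11 : dist p1 q1 = d - c := by
    apply dist_eq_aux hcd
    · constructor <;> simp [hp1, hq1]
    · intro i
      fin_cases i
      all_goals simp only [hp1, hq1]
      all_goals norm_num [Matrix.cons_val_succ, Real.dist_eq, abs_le]
      all_goals first
        | (constructor <;> linarith)
        | linarith
  have d12 : dist p1 q2 = d - c := by
    apply dist_eq_aux hcd
    · constructor <;> simp [hp1, hq2]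
    · intro i
      fin_cases i
      all_goals simp only [hp1, hq2]
      all_goals norm_num [Matrix.cons_val_succ, Real.dist_eq, abs_le]
      all_goals first
        | (constructor <;> linarith)
        | linarith
  have d21 : dist p2 q1 = d - c := by
    apply dist_eq_aux hcd
    · constructor <;> simp [hp2, hq1]
    · intro i
      fin_cases i
      all_goals simp only [hp2, hq1]
      all_goals norm_num [Matrix.cons_val_succ, Real.dist_eq, abs_le]
      all_goals first
        | (constructor <;> linarith)
        | linarith
  have d22 : dist p2 q2 = d - c := by
    apply dist_eq_aux hcd
    · constructor <;> simp [hp2, hq2]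
    · intro i
      fin_cases i
      all_goals simp only [hp2, hq2]
      all_goals norm_num [Matrix.cons_val_succ, Real.dist_eq, abs_le]
      all_goals first
        | (constructor <;> linarith)
        | linarith
  have hfin : EMetric.hausdorffEdist ({p1, p2} : Set (Fin 6 → ℝ)) {q1, q2} ≠ ⊤ := by
    apply Metric.hausdorffEdist_ne_top_of_nonempty_of_bounded
    · exact ⟨p1, by simp⟩
    · exact ⟨q1, by simp⟩
    · exact ((Set.finite_singleton p2).insert p1).isBounded
    · exact ((Set.finite_singleton q2).insert q1).isBounded
  have hmain : Metric.hausdorffDist ({p1, p2} : Set (Fin 6 → ℝ)) {q1, q2} = d - c := by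
    apply le_antisymm
    · apply Metric.hausdorffDist_le_of_mem_dist hr
      · rintro x (rfl | rfl)
        · exact ⟨q1, by simp, le_of_eq d11⟩
        · exact ⟨q1, by simp, le_of_eq d21⟩
      · rintro y (rfl | rfl)
        · exact ⟨p1, by simp, le_of_eq (by rw [dist_comm]; exact d11)⟩
        · exact ⟨p1, by simp, le_of_eq (by rw [dist_comm]; exact d12)⟩
    · have h1' : d - c ≤ Metric.infDist p1 ({q1, q2} : Set (Fin 6 → ℝ)) := by
        rw [infDist_pair, d11, d12, min_self]
      exact h1'.trans (Metric.infDist_le_hausdorffDist_of_mem (by simp) hfin)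
  exact ⟨hmain, by rw [hmain]; linarith⟩
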